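/- The rule LM→ is admissible in G3iM^w: if φ⇒ψ and Γ,□φ,θ⇒Δ are derivable in G3iM^w, then Γ,□φ,□ψ→θ⇒Δ is derivable in G3iM^w. -/

import Mathlib

/-- Formulas of intuitionistic (monotone) modal logic over atoms `ℕ`,
with conjunction, disjunction, implication, falsum and a box modality. -/
inductive Fm : Type where
  | atom : ℕ → Fm
  | bot  : Fm
  | and  : Fm → Fm → Fm
  | or   : Fm → Fm → Fm
  | imp  : Fm → Fm → Fm
  | box  : Fm → Fm
deriving DecidableEq

/-- `⊤` as the abbreviation `⊥ → ⊥`. -/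
def Fm.top : Fm := Fm.imp Fm.bot Fm.bot
/-- The sequent calculus `G3iM^w` for intuitionistic monotone modal logic:
single-conclusion sequents with a multiset antecedent. -/
inductive G3 : Multiset Fm → Fm → Prop
  | ax (Γ : Multiset Fm) (p : ℕ) : G3 (Fm.atom p ::ₘ Γ) (Fm.atom p)
  | lbot (Γ : Multiset Fm) (φ : Fm) : G3 (Fm.bot ::ₘ Γ) φ
  | land (Γ : Multiset Fm) (φ ψ θ : Fm) :
      G3 (φ ::ₘ ψ ::ₘ Γ) θ → G3 (φ.and ψ ::ₘ Γ) θ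
  | rand (Γ : Multiset Fm) (φ ψ : Fm) : G3 Γ φ → G3 Γ ψ → G3 Γ (φ.and ψ)
  | lor (Γ : Multiset Fm) (φ ψ θ : Fm) :
      G3 (φ ::ₘ Γ) θ → G3 (ψ ::ₘ Γ) θ → G3 (φ.or ψ ::ₘ Γ) θ
  | ror₁ (Γ : Multiset Fm) (φ ψ : Fm) : G3 Γ φ → G3 Γ (φ.or ψ)
  | ror₂ (Γ : Multiset Fm) (φ ψ : Fm) : G3 Γ ψ → G3 Γ (φ.or ψ)
  | limp (Γ : Multiset Fm) (φ ψ θ : Fm) :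
      G3 (φ.imp ψ ::ₘ Γ) φ → G3 (ψ ::ₘ Γ) θ → G3 (φ.imp ψ ::ₘ Γ) θ
  | rimp (Γ : Multiset Fm) (φ ψ : Fm) : G3 (φ ::ₘ Γ) ψ → G3 Γ (φ.imp ψ)
  | m (Γ : Multiset Fm) (φ ψ : Fm) : G3 {φ} ψ → G3 (φ.box ::ₘ Γ) (ψ.box)

/-- The rule `LM→` is admissible in `G3iM^w`: if `φ ⇒ ψ` and `Γ, □φ, θ ⇒ δ`
are derivable, so is `Γ, □φ, □ψ → θ ⇒ δ`. -/
theorem g3_lmimp_admissible (Γ : Multiset Fm) (φ ψ θ δ : Fm)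
    (h₁ : G3 {φ} ψ) (h₂ : G3 (φ.box ::ₘ θ ::ₘ Γ) δ) :
    G3 (φ.box ::ₘ (ψ.box).imp θ ::ₘ Γ) δ := by
  -- `M` concludes `□ψ` with the principal `□ψ → θ` of `L→` left in its context.
  rw [Multiset.cons_swap]
  refine G3.limp (φ.box ::ₘ Γ) ψ.box θ δ ?_ ?_
  · rw [Multiset.cons_swap]
    exact G3.m _ φ ψ h₁
  · rwa [Multiset.cons_swap]
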